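/- (Proposition 2) Under the federated setup with mutually uncorrelated noises satisfying 𝔼[e⁽ⁱ⁾ (e⁽ʲ⁾)ᵀ] = 0 for i ≠ j and 𝔼[e⁽ⁱ⁾ (e⁽ⁱ⁾)ᵀ] = σᵢ² I (all outer products entrywise integrable), the dispersion matrix Ω = 𝔼[(y^fed − ȳ₀)(y^fed − ȳ₀)ᵀ] satisfies the operator-norm bound ‖Ω‖₂ ≤ (α⁽⁰⁾)² σ₀² + Σ_{i=1}^{M-1} (α⁽ⁱ⁾)² ( ‖Δ⁽ⁱ⁾(Δ⁽ⁱ⁾)ᵀ‖₂ + σᵢ² ) + Σ_{i=1}^{M-1} Σ_{j=1, j≠i}^{M-1} α⁽ⁱ⁾ α⁽ʲ⁾ ‖Δ⁽ⁱ⁾(Δ⁽ʲ⁾)ᵀ‖₂, where ‖A‖₂ denotes the induced 2-norm (largest singular value) of a matrix A, so that ‖Δ⁽ⁱ⁾(Δ⁽ⁱ⁾)ᵀ‖₂ and ‖Δ⁽ⁱ⁾(Δ⁽ʲ⁾)ᵀ‖₂ are the largest singular values ρ_max(Ω_Δ^(i)) and ρ_max(Ω_Δ^(i,j)) of the dissimilarity-induced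 dispersion matrices. -/

import Mathlib

/-! Since the weights sum to one, `y^fed − ȳ₀ = D + E` with the deterministic bias
`D = ∑ α⁽ⁱ⁾ Δ⁽ⁱ⁾` and the centred noise `E = ∑ α⁽ⁱ⁾ e⁽ⁱ⁾`, so `Ω = D Dᵀ + 𝔼[E Eᵀ]`, and the
uncorrelatedness of the noises collapses `𝔼[E Eᵀ]` to `(∑ (α⁽ⁱ⁾)² σᵢ²) I`. Expanding
`D Dᵀ = ∑ᵢⱼ α⁽ⁱ⁾ α⁽ʲ⁾ Δ⁽ⁱ⁾ (Δ⁽ʲ⁾)ᵀ`, in which the terms with index `0` vanish because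
`Δ⁽⁰⁾ = 0`, the bound is the triangle inequality for `‖·‖₂` together with `‖I‖₂ ≤ 1`. -/

open MeasureTheory Finset Filter

/-- The induced 2-norm (operator norm with respect to the Euclidean norm, i.e. the
largest singular value) of a real square matrix. -/
noncomputable def inducedTwoNorm {n : ℕ} (A : Matrix (Fin n) (Fin n) ℝ) : ℝ :=
  ‖Matrix.toEuclideanCLM (𝕜 := ℝ) A‖

namespace Matrix

variable {ι κ m n R : Type*} [CommSemiring R]

theorem vecMulVec_sum_smul_sum_smul (s : Finset ι) (t : Finset κ) (α : ι → R) (β : κ → R)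
    (u : ι → m → R) (v : κ → n → R) :
    vecMulVec (∑ i ∈ s, α i • u i) (∑ j ∈ t, β j • v j)
      = ∑ i ∈ s, ∑ j ∈ t, (α i * β j) • vecMulVec (u i) (v j) := by
  ext a b
  simp only [vecMulVec_apply, Finset.sum_apply, Matrix.sum_apply, Pi.smul_apply, smul_eq_mul,
    Finset.sum_mul_sum]
  refine Finset.sum_congr rfl fun i _ => Finset.sum_congr rfl fun j _ => ?_
  rw [smul_apply, vecMulVec_apply, smul_eq_mul]
  ring

end Matrix

section InducedTwoNorm

variable {n : ℕ} {ι : Type*}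

theorem inducedTwoNorm_sum_le (s : Finset ι) (A : ι → Matrix (Fin n) (Fin n) ℝ) :
    inducedTwoNorm (∑ i ∈ s, A i) ≤ ∑ i ∈ s, inducedTwoNorm (A i) := by
  unfold inducedTwoNorm; rw [map_sum]; exact norm_sum_le _ _

theorem inducedTwoNorm_smul (c : ℝ) (A : Matrix (Fin n) (Fin n) ℝ) :
    inducedTwoNorm (c • A) = |c| * inducedTwoNorm A := by
  rw [inducedTwoNorm, map_smul, norm_smul, Real.norm_eq_abs, inducedTwoNorm]

theorem inducedTwoNorm_one_le :
    inducedTwoNorm (1 : Matrix (Fin n) (Fin n) ℝ) ≤ 1 := by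
  rw [inducedTwoNorm, map_one]
  exact ContinuousLinearMap.norm_id_le

theorem inducedTwoNorm_add_le (A B : Matrix (Fin n) (Fin n) ℝ) :
    inducedTwoNorm (A + B) ≤ inducedTwoNorm A + inducedTwoNorm B := by
  rw [inducedTwoNorm, map_add]; exact norm_add_le _ _

theorem inducedTwoNorm_smul_one_le {c : ℝ} (hc : 0 ≤ c) :
    inducedTwoNorm (c • (1 : Matrix (Fin n) (Fin n) ℝ)) ≤ c := by
  rw [inducedTwoNorm_smul, abs_of_nonneg hc]
  exact mul_le_of_le_one_right hc inducedTwoNorm_one_le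

theorem inducedTwoNorm_vecMulVec_sum_le (s : Finset ι) (α : ι → ℝ) (hα : ∀ i ∈ s, 0 ≤ α i)
    (u : ι → Fin n → ℝ) :
    inducedTwoNorm (Matrix.vecMulVec (∑ i ∈ s, α i • u i) (∑ j ∈ s, α j • u j))
      ≤ ∑ i ∈ s, ∑ j ∈ s, α i * α j * inducedTwoNorm (Matrix.vecMulVec (u i) (u j)) := by
  rw [Matrix.vecMulVec_sum_smul_sum_smul]
  refine (inducedTwoNorm_sum_le _ _).trans (Finset.sum_le_sum fun i hi => ?_)
  refine (inducedTwoNorm_sum_le _ _).trans (Finset.sum_le_sum fun j hj => ?_)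
  rw [inducedTwoNorm_smul, abs_of_nonneg (mul_nonneg (hα i hi) (hα j hj))]

end InducedTwoNorm

section Moments

variable {Ω ι κ : Type*} [MeasurableSpace Ω] {μ : Measure Ω}

theorem integral_sum_mul_sum (s : Finset ι) (t : Finset κ) (X : ι → Ω → ℝ) (Y : κ → Ω → ℝ)
    (hXY : ∀ i ∈ s, ∀ j ∈ t, Integrable (fun ω => X i ω * Y j ω) μ) :
    ∫ ω, (∑ i ∈ s, X i ω) * (∑ j ∈ t, Y j ω) ∂μ = ∑ i ∈ s, ∑ j ∈ t, ∫ ω, X i ω * Y j ω ∂μ := by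
  simp_rw [Finset.sum_mul_sum]
  rw [integral_finsetSum _ fun i hi => integrable_finsetSum _ fun j hj => hXY i hi j hj]
  exact Finset.sum_congr rfl fun i hi => integral_finsetSum _ fun j hj => hXY i hi j hj

theorem integrable_sum_mul_sum (s : Finset ι) (t : Finset κ) (X : ι → Ω → ℝ) (Y : κ → Ω → ℝ)
    (hXY : ∀ i ∈ s, ∀ j ∈ t, Integrable (fun ω => X i ω * Y j ω) μ) :
    Integrable (fun ω => (∑ i ∈ s, X i ω) * (∑ j ∈ t, Y j ω)) μ := by
  simp_rw [Finset.sum_mul_sum]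
  exact integrable_finsetSum _ fun i hi => integrable_finsetSum _ fun j hj => hXY i hi j hj

theorem integral_sum_mul_sum_of_uncorrelated (s : Finset ι) (α : ι → ℝ) (X Y : ι → Ω → ℝ)
    (c : ι → ℝ) (hXY : ∀ i j, Integrable (fun ω => X i ω * Y j ω) μ)
    (hcross : ∀ i j, i ≠ j → ∫ ω, X i ω * Y j ω ∂μ = 0)
    (hdiag : ∀ i, ∫ ω, X i ω * Y i ω ∂μ = c i) :
    ∫ ω, (∑ i ∈ s, α i * X i ω) * (∑ j ∈ s, α j * Y j ω) ∂μ = ∑ i ∈ s, α i ^ 2 * c i := by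
  rw [integral_sum_mul_sum _ _ _ _ fun i _ j _ => (hXY i j).const_mul (α i * α j) |>.congr
    (ae_of_all _ fun ω => by ring)]
  refine Finset.sum_congr rfl fun i hi => ?_
  rw [Finset.sum_eq_single_of_mem i hi fun j _ hji => ?_]
  · simp_rw [mul_mul_mul_comm (α i), integral_const_mul, hdiag, sq]
  · simp_rw [mul_mul_mul_comm (α i), integral_const_mul, hcross i j hji.symm, mul_zero]

variable [IsProbabilityMeasure μ]

theorem integral_const_add_mul_const_add {X Y : Ω → ℝ} (c d : ℝ) (hX : Integrable X μ)
    (hY : Integrable Y μ) (hXY : Integrable (fun ω => X ω * Y ω) μ) (hX0 : ∫ ω, X ω ∂μ = 0)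
    (hY0 : ∫ ω, Y ω ∂μ = 0) :
    ∫ ω, (c + X ω) * (d + Y ω) ∂μ = c * d + ∫ ω, X ω * Y ω ∂μ := by
  calc ∫ ω, (c + X ω) * (d + Y ω) ∂μ
      = ∫ ω, c * d + c * Y ω + d * X ω + X ω * Y ω ∂μ := by congr 1 with ω; ring
    _ = c * d + c * ∫ ω, Y ω ∂μ + d * ∫ ω, X ω ∂μ + ∫ ω, X ω * Y ω ∂μ := by
      rw [integral_add _ hXY, integral_add _ (hX.const_mul d), integral_add _ (hY.const_mul c),
        integral_const, integral_const_mul, integral_const_mul, probReal_univ, one_smul]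
      all_goals fun_prop
    _ = c * d + ∫ ω, X ω * Y ω ∂μ := by rw [hX0, hY0]; ring

theorem integral_add_sum_mul_add_sum_of_uncorrelated [Fintype ι] (c d : ℝ) (α : ι → ℝ)
    (X Y : ι → Ω → ℝ) (v : ι → ℝ) (hX : ∀ i, Integrable (X i) μ) (hY : ∀ i, Integrable (Y i) μ)
    (hX0 : ∀ i, ∫ ω, X i ω ∂μ = 0) (hY0 : ∀ i, ∫ ω, Y i ω ∂μ = 0)
    (hXY : ∀ i j, Integrable (fun ω => X i ω * Y j ω) μ)
    (hcross : ∀ i j, i ≠ j → ∫ ω, X i ω * Y j ω ∂μ = 0)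
    (hdiag : ∀ i, ∫ ω, X i ω * Y i ω ∂μ = v i) :
    ∫ ω, (c + ∑ i, α i * X i ω) * (d + ∑ j, α j * Y j ω) ∂μ = c * d + ∑ i, α i ^ 2 * v i := by
  have hαX : ∀ i ∈ univ, Integrable (fun ω => α i * X i ω) μ := fun i _ => (hX i).const_mul _
  have hαY : ∀ j ∈ univ, Integrable (fun ω => α j * Y j ω) μ := fun j _ => (hY j).const_mul _
  rw [integral_const_add_mul_const_add c d (integrable_finsetSum _ hαX)
    (integrable_finsetSum _ hαY)
    (integrable_sum_mul_sum _ _ _ _ fun i _ j _ => ((hXY i j).const_mul (α i * α j)).congr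
      (ae_of_all _ fun ω => by ring))
    (by simp [integral_finsetSum _ hαX, integral_const_mul, hX0])
    (by simp [integral_finsetSum _ hαY, integral_const_mul, hY0]),
    integral_sum_mul_sum_of_uncorrelated _ _ _ _ _ hXY hcross hdiag]

end Moments

theorem federated_dispersion_bound_general
    {n M : ℕ} (hM : 1 ≤ M)
    {Ω : Type*} [MeasurableSpace Ω] (μ : Measure Ω) [IsProbabilityMeasure μ]
    -- noiseless nominal output trajectory
    (ybar : Fin n → ℝ)
    -- deterministic discrepancy vectors, with zero discrepancy for the nominal system
    (Δ : Fin M → Fin n → ℝ) (hΔ0 : Δ ⟨0, hM⟩ = 0)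
    -- weights in [0,1] summing to one
    (α : Fin M → ℝ) (hα0 : ∀ i, 0 ≤ α i)
    (hαsum : ∑ i, α i = 1)
    -- noise standard deviations
    (σ : Fin M → ℝ)
    -- zero-mean integrable measurement noises
    (e : Fin M → Ω → Fin n → ℝ)
    (he_int : ∀ i, Integrable (e i) μ)
    (he_mean : ∀ i, ∫ ω, e i ω ∂μ = 0)
    -- entrywise integrability of all noise outer products
    (hout_int : ∀ i j : Fin M, ∀ a b : Fin n,
      Integrable (fun ω => e i ω a * e j ω b) μ)
    -- mutually uncorrelated noises: 𝔼[e⁽ⁱ⁾ (e⁽ʲ⁾)ᵀ] = 0 for i ≠ j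
    (he_cross : ∀ i j : Fin M, i ≠ j → ∀ a b : Fin n,
      ∫ ω, e i ω a * e j ω b ∂μ = 0)
    -- isotropic covariances: 𝔼[e⁽ⁱ⁾ (e⁽ⁱ⁾)ᵀ] = σᵢ² I
    (he_cov : ∀ i : Fin M, ∀ a b : Fin n,
      ∫ ω, e i ω a * e i ω b ∂μ = (σ i ^ 2 • (1 : Matrix (Fin n) (Fin n) ℝ)) a b)
    -- measured trajectories and the federated trajectory
    (y : Fin M → Ω → Fin n → ℝ)
    (hy : ∀ i ω, y i ω = ybar + Δ i + e i ω)
    (yfed : Ω → Fin n → ℝ)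
    (hyfed : ∀ ω, yfed ω = ∑ i, α i • y i ω)
    -- the dispersion matrix, defined entrywise
    (Ωdisp : Matrix (Fin n) (Fin n) ℝ)
    (hΩdisp : ∀ a b : Fin n,
      Ωdisp a b = ∫ ω, (yfed ω a - ybar a) * (yfed ω b - ybar b) ∂μ) :
    inducedTwoNorm Ωdisp
      ≤ (α ⟨0, hM⟩) ^ 2 * σ ⟨0, hM⟩ ^ 2
        + ∑ i ∈ Finset.univ.erase ⟨0, hM⟩,
            (α i) ^ 2 * (inducedTwoNorm (Matrix.vecMulVec (Δ i) (Δ i)) + σ i ^ 2)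
        + ∑ i ∈ Finset.univ.erase ⟨0, hM⟩,
            ∑ j ∈ (Finset.univ.erase (⟨0, hM⟩ : Fin M)).erase i,
              α i * α j * inducedTwoNorm (Matrix.vecMulVec (Δ i) (Δ j)) := by
  set z : Fin M := ⟨0, hM⟩
  set D := ∑ i, α i • Δ i
  have he_coord : ∀ i a, Integrable (fun ω => e i ω a) μ := fun i => (he_int i).eval
  have he_coord_mean : ∀ i a, ∫ ω, e i ω a ∂μ = 0 := fun i a => by
    rw [← eval_integral (he_int i).eval, he_mean]; rfl
  have hcentre : ∀ ω a, yfed ω a - ybar a = D a + ∑ i, α i * e i ω a := fun ω a => by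
    simp only [hyfed, hy, D, Finset.sum_apply, Pi.add_apply, Pi.smul_apply, smul_eq_mul, mul_add,
      Finset.sum_add_distrib, ← Finset.sum_mul, hαsum]
    ring
  have hdisp : Ωdisp = Matrix.vecMulVec D D + (∑ i, α i ^ 2 * σ i ^ 2) • 1 := by
    ext a b
    simp_rw [hΩdisp, hcentre]
    rw [integral_add_sum_mul_add_sum_of_uncorrelated _ _ _ _ _ _ (fun i => he_coord i a)
      (fun i => he_coord i b) (fun i => he_coord_mean i a) (fun i => he_coord_mean i b)
      (fun i j => hout_int i j a b) (fun i j hij => he_cross i j hij a b) (fun i => he_cov i a b)]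
    simp [Matrix.vecMulVec_apply, Finset.sum_mul, mul_assoc]
  have hD : D = ∑ i ∈ univ.erase z, α i • Δ i :=
    (Finset.sum_erase _ (by rw [hΔ0, smul_zero])).symm
  calc inducedTwoNorm Ωdisp
      ≤ inducedTwoNorm (Matrix.vecMulVec D D) + ∑ i, α i ^ 2 * σ i ^ 2 := by
        rw [hdisp]
        exact (inducedTwoNorm_add_le _ _).trans
          (add_le_add le_rfl (inducedTwoNorm_smul_one_le (by positivity)))
    _ ≤ ∑ i ∈ univ.erase z, ∑ j ∈ univ.erase z,
            α i * α j * inducedTwoNorm (Matrix.vecMulVec (Δ i) (Δ j)) + ∑ i, α i ^ 2 * σ i ^ 2 := by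
        rw [hD]
        exact add_le_add (inducedTwoNorm_vecMulVec_sum_le _ _ (fun i _ => hα0 i) _) le_rfl
    _ = _ := by
        rw [← add_sum_erase _ _ (mem_univ z)]
        rw [Finset.sum_congr rfl fun i hi => (add_sum_erase _ _ hi).symm]
        simp only [Finset.sum_add_distrib, mul_add, ← sq]
        ring

/-- **Proposition 2 of the paper.** Under the federated setup with mutually uncorrelated
noises having isotropic covariances `σᵢ² I`, the induced 2-norm of the dispersion matrix
`Ω = 𝔼[(y^fed − ȳ₀)(y^fed − ȳ₀)ᵀ]` is bounded by the weighted contributions of the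
noise variances and of the largest singular values of the dissimilarity-induced
dispersion matrices `Δ⁽ⁱ⁾(Δ⁽ʲ⁾)ᵀ`. -/
theorem federated_dispersion_bound
    {n M : ℕ} (hM : 1 ≤ M)
    {Ω : Type*} [MeasurableSpace Ω] (μ : Measure Ω) [IsProbabilityMeasure μ]
    -- noiseless nominal output trajectory
    (ybar : Fin n → ℝ)
    -- deterministic discrepancy vectors, with zero discrepancy for the nominal system
    (Δ : Fin M → Fin n → ℝ) (hΔ0 : Δ ⟨0, hM⟩ = 0)
    -- weights in [0,1] summing to one
    (α : Fin M → ℝ) (hα0 : ∀ i, 0 ≤ α i) (hα1 : ∀ i, α i ≤ 1)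
    (hαsum : ∑ i, α i = 1)
    -- noise standard deviations
    (σ : Fin M → ℝ) (hσ0 : ∀ i, 0 ≤ σ i)
    -- zero-mean integrable measurement noises
    (e : Fin M → Ω → Fin n → ℝ)
    (he_int : ∀ i, Integrable (e i) μ)
    (he_mean : ∀ i, ∫ ω, e i ω ∂μ = 0)
    -- entrywise integrability of all noise outer products
    (hout_int : ∀ i j : Fin M, ∀ a b : Fin n,
      Integrable (fun ω => e i ω a * e j ω b) μ)
    -- mutually uncorrelated noises: 𝔼[e⁽ⁱ⁾ (e⁽ʲ⁾)ᵀ] = 0 for i ≠ j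
    (he_cross : ∀ i j : Fin M, i ≠ j → ∀ a b : Fin n,
      ∫ ω, e i ω a * e j ω b ∂μ = 0)
    -- isotropic covariances: 𝔼[e⁽ⁱ⁾ (e⁽ⁱ⁾)ᵀ] = σᵢ² I
    (he_cov : ∀ i : Fin M, ∀ a b : Fin n,
      ∫ ω, e i ω a * e i ω b ∂μ = (σ i ^ 2 • (1 : Matrix (Fin n) (Fin n) ℝ)) a b)
    -- measured trajectories and the federated trajectory
    (y : Fin M → Ω → Fin n → ℝ)
    (hy : ∀ i ω, y i ω = ybar + Δ i + e i ω)
    (yfed : Ω → Fin n → ℝ)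
    (hyfed : ∀ ω, yfed ω = ∑ i, α i • y i ω)
    -- the dispersion matrix, defined entrywise
    (Ωdisp : Matrix (Fin n) (Fin n) ℝ)
    (hΩdisp : ∀ a b : Fin n,
      Ωdisp a b = ∫ ω, (yfed ω a - ybar a) * (yfed ω b - ybar b) ∂μ) :
    inducedTwoNorm Ωdisp
      ≤ (α ⟨0, hM⟩) ^ 2 * σ ⟨0, hM⟩ ^ 2
        + ∑ i ∈ Finset.univ.erase ⟨0, hM⟩,
            (α i) ^ 2 * (inducedTwoNorm (Matrix.vecMulVec (Δ i) (Δ i)) + σ i ^ 2)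
        + ∑ i ∈ Finset.univ.erase ⟨0, hM⟩,
            ∑ j ∈ (Finset.univ.erase (⟨0, hM⟩ : Fin M)).erase i,
              α i * α j * inducedTwoNorm (Matrix.vecMulVec (Δ i) (Δ j)) :=
  federated_dispersion_bound_general hM μ ybar Δ hΔ0 α hα0 hαsum σ e he_int he_mean hout_int
    he_cross he_cov y hy yfed hyfed Ωdisp hΩdisp
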